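/- arXiv:2512.22282 — 5 statements merged into one kernel-verified Lean document; each statement's English description precedes it below -/
import Mathlib

section
/- If a nonnegative matrix Φ has rank 2, then its nonnegative rank (the smallest K such that Φ = MH with M, H nonnegative of sizes I×K and K×J) is also 2. -/
/-- The nonnegative rank of a nonnegative I×J real matrix: the smallest K such that
Φ = M * H with M an I×K nonnegative matrix and H a K×J nonnegative matrix. -/
noncomputable def nonnegRank {I J : ℕ} (Φ : Matrix (Fin I) (Fin J) ℝ) : ℕ :=
  sInf {K : ℕ | ∃ (M : Matrix (Fin I) (Fin K) ℝ) (H : Matrix (Fin K) (Fin J) ℝ),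
    (∀ i k, 0 ≤ M i k) ∧ (∀ k j, 0 ≤ H k j) ∧ Φ = M * H}

/-!
Factor `Φ = A * B` through `𝕜²`. The column sums of `Φ` are `u ⬝ᵥ B.col j` with `u = 1 ᵥ* A`,
so the columns of `B` belonging to nonzero columns of `Φ` lie in the open half-plane `u ⬝ᵥ · > 0`.
Finitely many vectors in an open half-plane lie in the cone spanned by the two of extreme slope;
applying `A`, every column of `Φ` is a nonnegative combination of two columns of `Φ`, which is a
nonnegative factorization of size 2. Conversely every factorization has size at least the rank.
-/

open Matrix

theorem Matrix.exists_mul_eq_of_rank_eq {K m n : Type*} [Field K] [Fintype n] {A : Matrix m n K}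
    {r : ℕ} (h : A.rank = r) :
    ∃ (B : Matrix m (Fin r) K) (C : Matrix (Fin r) n K), A = B * C := by
  set V := Submodule.span K (Set.range A.col)
  have := FiniteDimensional.span_of_finite K (Set.finite_range A.col)
  let b := Module.finBasisOfFinrankEq K V ((A.rank_eq_finrank_span_cols).symm.trans h)
  have hcol : ∀ j, A.col j ∈ V := fun j => Submodule.subset_span ⟨j, rfl⟩
  refine ⟨.of fun i k => (b k : m → K) i, .of fun k j => b.repr ⟨A.col j, hcol j⟩ k, ?_⟩
  ext i j
  have := congrArg (fun v : V => (v : m → K) i) (b.sum_repr ⟨A.col j, hcol j⟩).symm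
  simp only [Submodule.coe_sum, Submodule.coe_smul, Finset.sum_apply, Pi.smul_apply,
    smul_eq_mul] at this
  simpa [mul_apply, mul_comm] using this

theorem Matrix.col_mul_eq_mulVec {R m n o : Type*} [NonUnitalNonAssocSemiring R] [Fintype n]
    (A : Matrix m n R) (B : Matrix n o R) (j : o) : (A * B).col j = A *ᵥ B.col j :=
  rfl

section

variable {𝕜 : Type*} [Field 𝕜] [LinearOrder 𝕜] [IsStrictOrderedRing 𝕜]

theorem eq_of_dotProduct_eq_of_dotProduct_rot_eq {u v w : Fin 2 → 𝕜} (hu : u ≠ 0)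
    (h : u ⬝ᵥ v = u ⬝ᵥ w) (hrot : ![-u 1, u 0] ⬝ᵥ v = ![-u 1, u 0] ⬝ᵥ w) : v = w := by
  have hpos : u 0 ^ 2 + u 1 ^ 2 ≠ 0 := by
    intro h0
    obtain ⟨h0, h1⟩ := (add_eq_zero_iff_of_nonneg (sq_nonneg _) (sq_nonneg _)).mp h0
    refine hu (funext fun k => ?_)
    fin_cases k
    exacts [pow_eq_zero_iff two_ne_zero |>.mp h0, pow_eq_zero_iff two_ne_zero |>.mp h1]
  simp only [dotProduct, Fin.sum_univ_two, Matrix.cons_val_zero, Matrix.cons_val_one] at h hrot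
  funext k
  fin_cases k
  · have : (u 0 ^ 2 + u 1 ^ 2) * (v 0 - w 0) = 0 := by linear_combination u 0 * h - u 1 * hrot
    simpa [hpos, sub_eq_zero] using this
  · have : (u 0 ^ 2 + u 1 ^ 2) * (v 1 - w 1) = 0 := by linear_combination u 1 * h + u 0 * hrot
    simpa [hpos, sub_eq_zero] using this

theorem exists_nonneg_comb_pair_of_dotProduct_pos {ι : Type*} {s : Finset ι} (hs : s.Nonempty)
    {u : Fin 2 → 𝕜} {w : ι → Fin 2 → 𝕜} (hw : ∀ j ∈ s, 0 < u ⬝ᵥ w j) :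
    ∃ a ∈ s, ∃ b ∈ s, ∀ j ∈ s, ∃ x y : 𝕜, 0 ≤ x ∧ 0 ≤ y ∧ w j = x • w a + y • w b := by
  have hu : u ≠ 0 := by
    rintro rfl
    obtain ⟨j, hj⟩ := hs
    simpa using hw j hj
  -- `w j / (u ⬝ᵥ w j)` lies on the line `u ⬝ᵥ · = 1`, at the position `t j`
  set t : ι → 𝕜 := fun j => ![-u 1, u 0] ⬝ᵥ w j / u ⬝ᵥ w j
  obtain ⟨a, ha, hmin⟩ := s.exists_min_image t hs
  obtain ⟨b, hb, hmax⟩ := s.exists_max_image t hs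
  refine ⟨a, ha, b, hb, fun j hj => ?_⟩
  obtain ⟨l, m, hl, hm, hlm, hlt⟩ := Icc_subset_segment ⟨hmin j hj, hmax j hj⟩
  have hwa := hw a ha
  have hwb := hw b hb
  have hwj := hw j hj
  refine ⟨l * (u ⬝ᵥ w j) / (u ⬝ᵥ w a), m * (u ⬝ᵥ w j) / (u ⬝ᵥ w b), by positivity,
    by positivity, ?_⟩
  apply eq_of_dotProduct_eq_of_dotProduct_rot_eq hu
  · simp only [dotProduct_add, dotProduct_smul, smul_eq_mul]
    rw [div_mul_cancel₀ _ hwa.ne', div_mul_cancel₀ _ hwb.ne']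
    linear_combination -(u ⬝ᵥ w j) * hlm
  · simp only [dotProduct_add, dotProduct_smul, smul_eq_mul]
    calc _ = u ⬝ᵥ w j * t j := by simp only [t]; field_simp
      _ = _ := by rw [← hlt]; simp only [t, smul_eq_mul]; field_simp

theorem Matrix.exists_nonneg_mul_eq_of_mul_eq {m n : Type*} [Fintype m] [Fintype n]
    {Φ : Matrix m n 𝕜} (hΦ : ∀ i j, 0 ≤ Φ i j) {A : Matrix m (Fin 2) 𝕜} {B : Matrix (Fin 2) n 𝕜}
    (hAB : Φ = A * B) :
    ∃ (M : Matrix m (Fin 2) 𝕜) (H : Matrix (Fin 2) n 𝕜),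
      (∀ i k, 0 ≤ M i k) ∧ (∀ k j, 0 ≤ H k j) ∧ Φ = M * H := by
  classical
  set s := Finset.univ.filter fun j => 0 < ∑ i, Φ i j
  have hzero : ∀ j ∉ s, Φ.col j = 0 := by
    intro j hj
    have hsum0 : ∑ i, Φ i j = 0 :=
      ((Finset.sum_nonneg fun i _ => hΦ i j).eq_of_not_lt (by simpa [s] using hj)).symm
    funext i
    exact (Finset.sum_eq_zero_iff_of_nonneg fun i _ => hΦ i j).mp hsum0 i (Finset.mem_univ i)
  rcases s.eq_empty_or_nonempty with hs | hs
  · refine ⟨0, 0, fun _ _ => le_rfl, fun _ _ => le_rfl, ?_⟩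
    ext i j
    simpa [hs] using congrFun (hzero j (by simp [hs])) i
  have hsum : ∀ j, (1 ᵥ* A) ⬝ᵥ B.col j = ∑ i, Φ i j := fun j => by
    rw [← dotProduct_mulVec, ← col_mul_eq_mulVec, ← hAB, one_dotProduct]; rfl
  obtain ⟨a, -, b, -, hab⟩ :=
    exists_nonneg_comb_pair_of_dotProduct_pos hs fun j hj => by rw [hsum]; simpa [s] using hj
  have hcomb : ∀ j, ∃ x y : 𝕜, 0 ≤ x ∧ 0 ≤ y ∧ Φ.col j = x • Φ.col a + y • Φ.col b := by
    intro j
    by_cases hj : j ∈ s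
    · obtain ⟨x, y, hx, hy, h⟩ := hab j hj
      refine ⟨x, y, hx, hy, ?_⟩
      simp only [hAB, col_mul_eq_mulVec, h, mulVec_add, mulVec_smul]
    · exact ⟨0, 0, le_rfl, le_rfl, by simp [hzero j hj]⟩
  choose x y hx hy hxy using hcomb
  refine ⟨Φ.submatrix id ![a, b], .of ![x, y], fun i k => hΦ _ _, ?_, ?_⟩
  · intro k j
    fin_cases k
    exacts [hx j, hy j]
  · ext i j
    simpa [mul_apply, mul_comm] using congrFun (hxy j) i

end

theorem nonnegRank_le {I J K : ℕ} {Φ : Matrix (Fin I) (Fin J) ℝ} {M : Matrix (Fin I) (Fin K) ℝ}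
    {H : Matrix (Fin K) (Fin J) ℝ} (hM : ∀ i k, 0 ≤ M i k) (hH : ∀ k j, 0 ≤ H k j)
    (hMH : Φ = M * H) : nonnegRank Φ ≤ K :=
  Nat.sInf_le ⟨M, H, hM, hH, hMH⟩

theorem rank_le_nonnegRank {I J : ℕ} {Φ : Matrix (Fin I) (Fin J) ℝ} (hΦ : ∀ i j, 0 ≤ Φ i j) :
    Φ.rank ≤ nonnegRank Φ := by
  refine le_csInf ⟨J, Φ, 1, hΦ, fun k j => ?_, (Matrix.mul_one Φ).symm⟩ ?_
  · rw [one_apply]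
    split_ifs <;> norm_num
  · rintro K ⟨M, H, -, -, rfl⟩
    exact (rank_mul_le_left M H).trans (rank_le_width M)

theorem nonnegRank_eq_two_of_rank_eq_two_general {I J : ℕ}
    (Φ : Matrix (Fin I) (Fin J) ℝ)
    (hΦ : ∀ i j, 0 ≤ Φ i j) (hrank : Φ.rank = 2) :
    nonnegRank Φ = 2 := by
  obtain ⟨A, B, hAB⟩ := Φ.exists_mul_eq_of_rank_eq hrank
  obtain ⟨M, H, hM, hH, hMH⟩ := exists_nonneg_mul_eq_of_mul_eq hΦ hAB
  exact (nonnegRank_le hM hH hMH).antisymm (hrank ▸ rank_le_nonnegRank hΦ)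

/-- If a nonnegative matrix Φ is nonzero and has rank 2, then its nonnegative rank is also 2. -/
theorem nonnegRank_eq_two_of_rank_eq_two {I J : ℕ}
    (Φ : Matrix (Fin I) (Fin J) ℝ)
    (hΦ : ∀ i j, 0 ≤ Φ i j) (hne : Φ ≠ 0) (hrank : Φ.rank = 2) :
    nonnegRank Φ = 2 :=
  nonnegRank_eq_two_of_rank_eq_two_general Φ hΦ hrank
end

section
/- Every row-stochastic factorization (LBA/EMA/PLSA) of a row-stochastic matrix Π gives rise to a three-factor LCA factorization: if Π = WG with W, G nonnegative and row sums all equal to 1, and D is a diagonal matrix with positive diagonal whose diagonal entries sum appropriately so that Ψ = DΠ has total entry sum 1, then Ψ = AΘB where A = DW·diag(1ᵀDW)⁻¹ has columns summing to 1, Θ = diag(1ᵀDW) is diagonal with total sum 1, and B = G has rows summing to 1, with all three matrices nonnegative. -/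
open Finset

namespace Matrix

variable {m n α : Type*}

theorem sum_sum_diagonal_mul_of_row_sum_eq_one [Fintype m] [DecidableEq m] [Fintype n]
    [Semiring α] (d : m → α) {M : Matrix m n α} (hM : ∀ i, ∑ j, M i j = 1) :
    ∑ i, ∑ j, (diagonal d * M) i j = ∑ i, d i := by
  simp only [diagonal_mul, ← mul_sum, hM, mul_one]

theorem mul_diagonal_eq_of_apply_eq_div [Fintype n] [DecidableEq n] [DivisionRing α]
    {A M : Matrix m n α} {c : n → α} (hA : ∀ i k, A i k = M i k / c k) (hc : ∀ k, c k ≠ 0) :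
    A * diagonal c = M := by
  ext i k
  rw [mul_diagonal, hA, div_mul_cancel₀ _ (hc k)]

end Matrix

theorem lba_to_lca_general {I J K : ℕ}
    (Pi : Matrix (Fin I) (Fin J) ℝ)
    (W : Matrix (Fin I) (Fin K) ℝ) (G : Matrix (Fin K) (Fin J) ℝ)
    (hPi_rows : ∀ i, ∑ j, Pi i j = 1)
    (hW_nonneg : ∀ i k, 0 ≤ W i k) (hW_rows : ∀ i, ∑ k, W i k = 1)
    (hG_nonneg : ∀ k j, 0 ≤ G k j) (hG_rows : ∀ k, ∑ j, G k j = 1)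
    (hfact : Pi = W * G)
    (d : Fin I → ℝ) (hd_pos : ∀ i, 0 < d i) (hd_sum : ∑ i, d i = 1)
    (hcol_pos : ∀ k, 0 < ∑ i, (Matrix.diagonal d * W) i k) :
    -- the column sums of D·W
    let c : Fin K → ℝ := fun k => ∑ i, (Matrix.diagonal d * W) i k
    let A : Matrix (Fin I) (Fin K) ℝ := fun i k => (Matrix.diagonal d * W) i k / c k
    let Θ : Matrix (Fin K) (Fin K) ℝ := Matrix.diagonal c
    let B : Matrix (Fin K) (Fin J) ℝ := G
    let Ψ : Matrix (Fin I) (Fin J) ℝ := Matrix.diagonal d * Pi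
    (∑ i, ∑ j, Ψ i j = 1) ∧
    Ψ = A * Θ * B ∧
    (∀ i k, 0 ≤ A i k) ∧ (∀ k, ∑ i, A i k = 1) ∧
    (∀ k, 0 ≤ c k) ∧ (∑ k, c k = 1) ∧
    (∀ k j, 0 ≤ B k j) ∧ (∀ k, ∑ j, B k j = 1) := by
  intro c A Θ B Ψ
  have hc : ∀ k, c k ≠ 0 := fun k => (hcol_pos k).ne'
  refine ⟨?_, ?_, fun i k => ?_, fun k => ?_, fun k => (hcol_pos k).le, ?_, hG_nonneg, hG_rows⟩
  · rw [Matrix.sum_sum_diagonal_mul_of_row_sum_eq_one d hPi_rows, hd_sum]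
  · rw [Matrix.mul_diagonal_eq_of_apply_eq_div (fun _ _ => rfl) hc, Matrix.mul_assoc]
    exact congrArg (Matrix.diagonal d * ·) hfact
  · show 0 ≤ (Matrix.diagonal d * W) i k / c k
    rw [Matrix.diagonal_mul]
    exact div_nonneg (mul_nonneg (hd_pos i).le (hW_nonneg i k)) (hcol_pos k).le
  · rw [← sum_div]
    exact div_self (hc k)
  · rw [sum_comm, Matrix.sum_sum_diagonal_mul_of_row_sum_eq_one d hW_rows, hd_sum]

/-- Every row-stochastic factorization Π = W·G of a row-stochastic matrix, together with a
positive diagonal scaling D (with trace 1), gives rise to a three-factor LCA factorization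
Ψ = A·Θ·B with A column-stochastic, Θ diagonal nonnegative with total sum 1, and B
row-stochastic. -/
theorem lba_to_lca {I J K : ℕ}
    (Pi : Matrix (Fin I) (Fin J) ℝ)
    (W : Matrix (Fin I) (Fin K) ℝ) (G : Matrix (Fin K) (Fin J) ℝ)
    (hPi_nonneg : ∀ i j, 0 ≤ Pi i j) (hPi_rows : ∀ i, ∑ j, Pi i j = 1)
    (hW_nonneg : ∀ i k, 0 ≤ W i k) (hW_rows : ∀ i, ∑ k, W i k = 1)
    (hG_nonneg : ∀ k j, 0 ≤ G k j) (hG_rows : ∀ k, ∑ j, G k j = 1)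
    (hfact : Pi = W * G)
    (d : Fin I → ℝ) (hd_pos : ∀ i, 0 < d i) (hd_sum : ∑ i, d i = 1)
    (hcol_pos : ∀ k, 0 < ∑ i, (Matrix.diagonal d * W) i k) :
    -- the column sums of D·W
    let c : Fin K → ℝ := fun k => ∑ i, (Matrix.diagonal d * W) i k
    let A : Matrix (Fin I) (Fin K) ℝ := fun i k => (Matrix.diagonal d * W) i k / c k
    let Θ : Matrix (Fin K) (Fin K) ℝ := Matrix.diagonal c
    let B : Matrix (Fin K) (Fin J) ℝ := G
    let Ψ : Matrix (Fin I) (Fin J) ℝ := Matrix.diagonal d * Pi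
    (∑ i, ∑ j, Ψ i j = 1) ∧
    Ψ = A * Θ * B ∧
    (∀ i k, 0 ≤ A i k) ∧ (∀ k, ∑ i, A i k = 1) ∧
    (∀ k, 0 ≤ c k) ∧ (∑ k, c k = 1) ∧
    (∀ k j, 0 ≤ B k j) ∧ (∀ k, ∑ j, B k j = 1) :=
  lba_to_lca_general Pi W G hPi_rows hW_nonneg hW_rows hG_nonneg hG_rows hfact d hd_pos hd_sum
    hcol_pos
end

section
/- Every three-factor LCA factorization of a matrix Ψ with overall sum 1 yields a row-stochastic two-factor (LBA) factorization of the row-normalized matrix: if Ψ = AΘB with A nonnegative with column sums 1, Θ diagonal nonnegative with total sum 1, B nonnegative with row sums 1, and all row sums of Ψ are positive, then Π = D_Ψ⁻¹Ψ factors as Π = WG where W = D_Ψ⁻¹AΘ is nonnegative with row sums 1 and G = B is nonnegative with row sums 1, where D_Ψ is the diagonal matrix of row sums of Ψ. -/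
open Matrix

theorem Matrix.sum_mul_apply_of_row_sums_eq_one {m n p R : Type*} [Fintype n] [Fintype p]
    [NonAssocSemiring R] (M : Matrix m n R) {N : Matrix n p R} (hN : ∀ k, ∑ j, N k j = 1)
    (i : m) : ∑ j, (M * N) i j = ∑ k, M i k := by
  simp only [mul_apply]
  rw [Finset.sum_comm]
  simp only [← Finset.mul_sum, hN, mul_one]

theorem lca_to_lba_general {I J K : ℕ}
    (Ψ : Matrix (Fin I) (Fin J) ℝ)
    (A : Matrix (Fin I) (Fin K) ℝ) (θ : Fin K → ℝ) (B : Matrix (Fin K) (Fin J) ℝ)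
    (hΨ_rows_pos : ∀ i, 0 < ∑ j, Ψ i j)
    (hA_nonneg : ∀ i k, 0 ≤ A i k)
    (hθ_nonneg : ∀ k, 0 ≤ θ k)
    (hB_nonneg : ∀ k j, 0 ≤ B k j) (hB_rows : ∀ k, ∑ j, B k j = 1)
    (hfact : Ψ = A * Matrix.diagonal θ * B) :
    let DΨinv : Matrix (Fin I) (Fin I) ℝ := Matrix.diagonal fun i => (∑ j, Ψ i j)⁻¹
    let Pi : Matrix (Fin I) (Fin J) ℝ := DΨinv * Ψ
    let W : Matrix (Fin I) (Fin K) ℝ := DΨinv * A * Matrix.diagonal θ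
    let G : Matrix (Fin K) (Fin J) ℝ := B
    Pi = W * G ∧
    (∀ i k, 0 ≤ W i k) ∧ (∀ i, ∑ k, W i k = 1) ∧
    (∀ k j, 0 ≤ G k j) ∧ (∀ k, ∑ j, G k j = 1) := by
  intro DΨinv Pi W G
  have hW : ∀ i k, W i k = (∑ j, Ψ i j)⁻¹ * A i k * θ k := fun i k => by
    simp only [W, DΨinv, mul_diagonal, diagonal_mul]
  have hrow : ∀ i, ∑ j, Ψ i j = ∑ k, A i k * θ k := fun i => by
    rw [hfact, sum_mul_apply_of_row_sums_eq_one _ hB_rows]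
    simp only [mul_diagonal]
  refine ⟨?_, fun i k => ?_, fun i => ?_, hB_nonneg, hB_rows⟩
  · simp only [Pi, W, G, Matrix.mul_assoc]
    rw [← Matrix.mul_assoc A, ← hfact]
  · rw [hW]
    exact mul_nonneg (mul_nonneg (inv_nonneg.2 (hΨ_rows_pos i).le) (hA_nonneg i k)) (hθ_nonneg k)
  · calc ∑ k, W i k = (∑ j, Ψ i j)⁻¹ * ∑ k, A i k * θ k := by
          simp only [hW, mul_assoc, Finset.mul_sum]
      _ = 1 := by rw [← hrow, inv_mul_cancel₀ (hΨ_rows_pos i).ne']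

/-- Every three-factor LCA factorization Ψ = A·Θ·B of a matrix Ψ with total sum 1 and
positive row sums yields a row-stochastic two-factor (LBA) factorization of the
row-normalized matrix Π = D_Ψ⁻¹·Ψ, namely Π = W·G with W = D_Ψ⁻¹·A·Θ and G = B. -/
theorem lca_to_lba {I J K : ℕ}
    (Ψ : Matrix (Fin I) (Fin J) ℝ)
    (A : Matrix (Fin I) (Fin K) ℝ) (θ : Fin K → ℝ) (B : Matrix (Fin K) (Fin J) ℝ)
    (hΨ_nonneg : ∀ i j, 0 ≤ Ψ i j)
    (hΨ_total : ∑ i, ∑ j, Ψ i j = 1)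
    (hΨ_rows_pos : ∀ i, 0 < ∑ j, Ψ i j)
    (hA_nonneg : ∀ i k, 0 ≤ A i k) (hA_cols : ∀ k, ∑ i, A i k = 1)
    (hθ_nonneg : ∀ k, 0 ≤ θ k) (hθ_sum : ∑ k, θ k = 1)
    (hB_nonneg : ∀ k j, 0 ≤ B k j) (hB_rows : ∀ k, ∑ j, B k j = 1)
    (hfact : Ψ = A * Matrix.diagonal θ * B) :
    let DΨinv : Matrix (Fin I) (Fin I) ℝ := Matrix.diagonal fun i => (∑ j, Ψ i j)⁻¹
    let Pi : Matrix (Fin I) (Fin J) ℝ := DΨinv * Ψ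
    let W : Matrix (Fin I) (Fin K) ℝ := DΨinv * A * Matrix.diagonal θ
    let G : Matrix (Fin K) (Fin J) ℝ := B
    Pi = W * G ∧
    (∀ i k, 0 ≤ W i k) ∧ (∀ i, ∑ k, W i k = 1) ∧
    (∀ k j, 0 ≤ G k j) ∧ (∀ k, ∑ j, G k j = 1) :=
  lca_to_lba_general Ψ A θ B hΨ_rows_pos hA_nonneg hθ_nonneg hB_nonneg hB_rows hfact
end

section
/- If T is a K×K matrix that is simultaneously row-stochastic (nonnegative entries, each row sums to 1) and its inverse T⁻¹ is also row-stochastic, then T is a permutation matrix. -/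
/-!
A nonnegative matrix `A` with nonnegative inverse `B` is monomial. Since `(A * B) i k = 0` for
`k ≠ i` is a sum of nonnegative terms, `A i j ≠ 0` forces row `j` of `B` to vanish off column `i`;
symmetrically `B j i ≠ 0` forces row `i` of `A` to vanish off column `j`, and the diagonal entries
`(A * B) i i = 1` supply such a pair `j`. So the support of `A` is the graph of a permutation, and
unit row sums make the surviving entries equal to `1`.
-/

/-- `P` is a permutation matrix. -/
def IsPermMatrix {K : ℕ} (P : Matrix (Fin K) (Fin K) ℝ) : Prop :=
  ∃ σ : Equiv.Perm (Fin K), ∀ i j, P i j = if σ i = j then 1 else 0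

namespace Matrix

variable {n R : Type*} [Fintype n] [DecidableEq n]

theorem exists_ne_zero_ne_zero_of_mul_eq_one [NonAssocSemiring R] [Nontrivial R]
    {A B : Matrix n n R} (hAB : A * B = 1) (i : n) :
    ∃ j, A i j ≠ 0 ∧ B j i ≠ 0 := by
  have hdiag : ∑ j, A i j * B j i ≠ 0 := by
    rw [← mul_apply, hAB, one_apply_eq]
    exact one_ne_zero
  obtain ⟨j, -, hj⟩ := Finset.exists_ne_zero_of_sum_ne_zero hdiag
  exact ⟨j, left_ne_zero_of_mul hj, right_ne_zero_of_mul hj⟩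

variable [Ring R] [LinearOrder R] [IsStrictOrderedRing R] {A B : Matrix n n R}

theorem eq_zero_of_mul_eq_one_of_nonneg (hAB : A * B = 1) (hA : ∀ i j, 0 ≤ A i j)
    (hB : ∀ i j, 0 ≤ B i j) {i j k : n} (hij : A i j ≠ 0) (hki : k ≠ i) : B j k = 0 := by
  have hsum : ∑ l, A i l * B l k = 0 := by
    rw [← mul_apply, hAB, one_apply_ne hki.symm]
  have hterm := (Finset.sum_eq_zero_iff_of_nonneg fun l _ ↦ mul_nonneg (hA i l) (hB l k)).mp
    hsum j (Finset.mem_univ j)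
  exact (mul_eq_zero.mp hterm).resolve_left hij

theorem exists_perm_ne_zero_iff_of_mul_eq_one_of_nonneg (hAB : A * B = 1) (hBA : B * A = 1)
    (hA : ∀ i j, 0 ≤ A i j) (hB : ∀ i j, 0 ≤ B i j) :
    ∃ σ : Equiv.Perm n, ∀ i j, A i j ≠ 0 ↔ σ i = j := by
  choose f hfA hfB using exists_ne_zero_ne_zero_of_mul_eq_one hAB
  have hsupp : ∀ i j, A i j ≠ 0 → f i = j := fun i j hij ↦ by
    by_contra hne
    exact hij (eq_zero_of_mul_eq_one_of_nonneg hBA hB hA (hfB i) (Ne.symm hne))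
  have hinj : Function.Injective f := fun i₁ i₂ hf ↦ by
    by_contra hne
    exact hfB i₂ (hf ▸ eq_zero_of_mul_eq_one_of_nonneg hAB hA hB (hfA i₁) (Ne.symm hne))
  refine ⟨Equiv.ofBijective f (Finite.injective_iff_bijective.mp hinj), fun i j ↦ ?_⟩
  exact ⟨hsupp i j, fun h ↦ h ▸ hfA i⟩

end Matrix

theorem perm_of_doubly_rowStochastic_inverse_general {K : ℕ}
    (T T' : Matrix (Fin K) (Fin K) ℝ)
    (hTT' : T * T' = 1) (hT'T : T' * T = 1)
    (hT_nonneg : ∀ i j, 0 ≤ T i j) (hT_rows : ∀ i, ∑ j, T i j = 1)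
    (hT'_nonneg : ∀ i j, 0 ≤ T' i j) :
    IsPermMatrix T := by
  obtain ⟨σ, hσ⟩ :=
    Matrix.exists_perm_ne_zero_iff_of_mul_eq_one_of_nonneg hTT' hT'T hT_nonneg hT'_nonneg
  have hoff : ∀ i j, σ i ≠ j → T i j = 0 := fun i j h ↦ not_not.mp (mt (hσ i j).mp h)
  refine ⟨σ, fun i j ↦ ?_⟩
  split_ifs with h
  · rw [← h, ← hT_rows i, Finset.sum_eq_single (σ i) (fun l _ hl ↦ hoff i l (Ne.symm hl))
      (fun h ↦ absurd (Finset.mem_univ _) h)]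
  · exact hoff i j h

/-- A K×K matrix that is row-stochastic and whose inverse is also row-stochastic
is a permutation matrix. -/
theorem perm_of_doubly_rowStochastic_inverse {K : ℕ}
    (T T' : Matrix (Fin K) (Fin K) ℝ)
    (hTT' : T * T' = 1) (hT'T : T' * T = 1)
    (hT_nonneg : ∀ i j, 0 ≤ T i j) (hT_rows : ∀ i, ∑ j, T i j = 1)
    (hT'_nonneg : ∀ i j, 0 ≤ T' i j) (hT'_rows : ∀ i, ∑ j, T' i j = 1) :
    IsPermMatrix T :=
  perm_of_doubly_rowStochastic_inverse_general T T' hTT' hT'T hT_nonneg hT_rows hT'_nonneg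
end

section
/- For K = 2, if the coefficient matrix W in a rank-2 row-stochastic factorization Π = WG contains a permuted 2×2 identity submatrix (separability), then the factorization is unique up to permutation: any other factorization Π = W̃G̃ with W̃, G̃ nonnegative row-stochastic and rank(G̃) = 2, where W̃ also contains a permuted 2×2 identity submatrix, satisfies G̃ = ΓG and W̃ = WΓ⁻¹ for some 2×2 permutation matrix Γ. -/
open Matrix

namespace Matrix

variable {l m n o R : Type*}

theorem submatrix_mul_id [Fintype n] [Mul R] [AddCommMonoid R]
    (M : Matrix m n R) (N : Matrix n o R) (r : l → m) :
    (M * N).submatrix r id = M.submatrix r id * N :=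
  submatrix_mul M N r id id Function.bijective_id

theorem exists_submatrix_eq_one_of_fin_two [Zero R] [One R] {W : Matrix m (Fin 2) R}
    (h : ∃ i₁ i₂, W i₁ 0 = 1 ∧ W i₁ 1 = 0 ∧ W i₂ 0 = 0 ∧ W i₂ 1 = 1) :
    ∃ r : Fin 2 → m, W.submatrix r id = 1 := by
  obtain ⟨i₁, i₂, h₁₀, h₁₁, h₂₀, h₂₁⟩ := h
  refine ⟨![i₁, i₂], ?_⟩
  ext a b
  fin_cases a <;> fin_cases b <;> simp [h₁₀, h₁₁, h₂₀, h₂₁]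

theorem mul_left_cancel_of_rank_eq_card [Field R] [Fintype m] [Fintype n] {G : Matrix m n R}
    (hG : G.rank = Fintype.card m) {X Y : Matrix l m R} (h : X * G = Y * G) : X = Y := by
  have hrows : LinearIndependent R G.row :=
    linearIndependent_iff_card_eq_finrank_span.mpr (hG ▸ G.rank_eq_finrank_span_row)
  ext i k
  refine sub_eq_zero.mp (Fintype.linearIndependent_iff.mp hrows (X i - Y i) ?_ k)
  rw [row, ← vecMul_eq_sum, sub_vecMul]
  exact sub_eq_zero.mpr (congr_fun h i)

theorem exists_row_eq_single_of_mul_eq_one [Fintype m] [DecidableEq m]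
    [Field R] [LinearOrder R] [IsStrictOrderedRing R] {A B : Matrix m m R}
    (hA : ∀ i j, 0 ≤ A i j) (hB : ∀ i j, 0 ≤ B i j) (hA_rows : ∀ i, ∑ j, A i j = 1)
    (hBA : B * A = 1) (k : m) : ∃ i, ∀ j, A k j = if i = j then 1 else 0 := by
  obtain ⟨i, hik⟩ : ∃ i, B i k ≠ 0 := by
    have hkk : ∑ j, A k j * B j k ≠ 0 := by
      rw [← mul_apply, mul_eq_one_comm.mp hBA, one_apply_eq]
      exact one_ne_zero
    obtain ⟨i, -, hi⟩ := Finset.exists_ne_zero_of_sum_ne_zero hkk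
    exact ⟨i, right_ne_zero_of_mul hi⟩
  -- `0 = (B * A) i j ≥ B i k * A k j` for `j ≠ i`, with `B i k > 0`.
  have hoff : ∀ j ≠ i, A k j = 0 := by
    intro j hj
    have hsum : ∑ l, B i l * A l j = 0 := by
      rw [← mul_apply, hBA, one_apply_ne hj.symm]
    have hterm := (Finset.sum_eq_zero_iff_of_nonneg fun l _ ↦ mul_nonneg (hB i l) (hA l j)).mp
      hsum k (Finset.mem_univ k)
    exact (mul_eq_zero.mp hterm).resolve_left hik
  refine ⟨i, fun j ↦ ?_⟩
  split_ifs with hij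
  · subst hij
    rw [← hA_rows k, Finset.sum_eq_single i (fun j _ hj ↦ hoff j hj) (by simp)]
  · exact hoff j (Ne.symm hij)

end Matrix

theorem isPermMatrix_of_mul_eq_one {K : ℕ} {A B : Matrix (Fin K) (Fin K) ℝ}
    (hA : ∀ i j, 0 ≤ A i j) (hB : ∀ i j, 0 ≤ B i j) (hA_rows : ∀ i, ∑ j, A i j = 1)
    (hBA : B * A = 1) : IsPermMatrix A := by
  choose σ hσ using exists_row_eq_single_of_mul_eq_one hA hB hA_rows hBA
  have hAB : ∀ k l, B (σ k) l = (1 : Matrix (Fin K) (Fin K) ℝ) k l := by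
    intro k l
    simp [← mul_eq_one_comm.mp hBA, mul_apply, hσ]
  have hσ_inj : Function.Injective σ := by
    intro k k' hkk'
    by_contra hne
    have h₁ := hAB k k
    rw [hkk', hAB k' k, one_apply_eq, one_apply_ne (Ne.symm hne)] at h₁
    exact zero_ne_one h₁
  exact ⟨Equiv.ofBijective σ (Finite.injective_iff_bijective.mp hσ_inj), hσ⟩

theorem lba_unique_K2_separable_general {I J : ℕ}
    (Pi : Matrix (Fin I) (Fin J) ℝ)
    (W W' : Matrix (Fin I) (Fin 2) ℝ) (G G' : Matrix (Fin 2) (Fin J) ℝ)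
    (hW_nonneg : ∀ i k, 0 ≤ W i k) (hW_rows : ∀ i, ∑ k, W i k = 1)
    (hG_rank : G.rank = 2)
    (hfact : Pi = W * G)
    (hW_sep : ∃ i₁ i₂ : Fin I, W i₁ 0 = 1 ∧ W i₁ 1 = 0 ∧ W i₂ 0 = 0 ∧ W i₂ 1 = 1)
    (hW'_nonneg : ∀ i k, 0 ≤ W' i k)
    (hfact' : Pi = W' * G')
    (hW'_sep : ∃ i₁ i₂ : Fin I, W' i₁ 0 = 1 ∧ W' i₁ 1 = 0 ∧ W' i₂ 0 = 0 ∧ W' i₂ 1 = 1) :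
    ∃ Γ : Matrix (Fin 2) (Fin 2) ℝ, IsPermMatrix Γ ∧ G' = Γ * G ∧ W = W' * Γ := by
  obtain ⟨r, hr⟩ := exists_submatrix_eq_one_of_fin_two hW_sep
  obtain ⟨r', hr'⟩ := exists_submatrix_eq_one_of_fin_two hW'_sep
  have hG_full : G.rank = Fintype.card (Fin 2) := hG_rank
  have hG' : G' = W.submatrix r' id * G := by
    rw [← submatrix_mul_id, ← hfact, hfact', submatrix_mul_id, hr', Matrix.one_mul]
  have hG : G = W'.submatrix r id * G' := by
    rw [← submatrix_mul_id, ← hfact', hfact, submatrix_mul_id, hr, Matrix.one_mul]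
  have hBA : W'.submatrix r id * W.submatrix r' id = 1 :=
    mul_left_cancel_of_rank_eq_card hG_full <| by
      rw [Matrix.mul_assoc, ← hG', ← hG, Matrix.one_mul]
  refine ⟨W.submatrix r' id, ?_, hG', ?_⟩
  · exact isPermMatrix_of_mul_eq_one (fun i k ↦ hW_nonneg (r' i) k)
      (fun i k ↦ hW'_nonneg (r i) k) (fun i ↦ hW_rows (r' i)) hBA
  · exact mul_left_cancel_of_rank_eq_card hG_full <| by
      rw [← hfact, Matrix.mul_assoc, ← hG', hfact']

/-- For K = 2: if both row-stochastic rank-2 factorizations Π = W·G = W̃·G̃ have separable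
coefficient matrices (each contains the rows (1,0) and (0,1)), then they coincide up to a
permutation: G̃ = Γ·G and W = W̃·Γ for some 2×2 permutation matrix Γ. -/
theorem lba_unique_K2_separable {I J : ℕ}
    (Pi : Matrix (Fin I) (Fin J) ℝ)
    (W W' : Matrix (Fin I) (Fin 2) ℝ) (G G' : Matrix (Fin 2) (Fin J) ℝ)
    (hPi_nonneg : ∀ i j, 0 ≤ Pi i j) (hPi_rows : ∀ i, ∑ j, Pi i j = 1)
    (hPi_rank : Pi.rank = 2)
    (hW_nonneg : ∀ i k, 0 ≤ W i k) (hW_rows : ∀ i, ∑ k, W i k = 1)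
    (hG_nonneg : ∀ k j, 0 ≤ G k j) (hG_rows : ∀ k, ∑ j, G k j = 1)
    (hG_rank : G.rank = 2)
    (hfact : Pi = W * G)
    (hW_sep : ∃ i₁ i₂ : Fin I, W i₁ 0 = 1 ∧ W i₁ 1 = 0 ∧ W i₂ 0 = 0 ∧ W i₂ 1 = 1)
    (hW'_nonneg : ∀ i k, 0 ≤ W' i k) (hW'_rows : ∀ i, ∑ k, W' i k = 1)
    (hG'_nonneg : ∀ k j, 0 ≤ G' k j) (hG'_rows : ∀ k, ∑ j, G' k j = 1)
    (hG'_rank : G'.rank = 2)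
    (hfact' : Pi = W' * G')
    (hW'_sep : ∃ i₁ i₂ : Fin I, W' i₁ 0 = 1 ∧ W' i₁ 1 = 0 ∧ W' i₂ 0 = 0 ∧ W' i₂ 1 = 1) :
    ∃ Γ : Matrix (Fin 2) (Fin 2) ℝ, IsPermMatrix Γ ∧ G' = Γ * G ∧ W = W' * Γ :=
  lba_unique_K2_separable_general Pi W W' G G' hW_nonneg hW_rows hG_rank hfact hW_sep hW'_nonneg
    hfact' hW'_sep
end
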